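/- arXiv:1002.4486 — 5 statements merged into one kernel-verified Lean document; each statement's English description precedes it below -/
import Mathlib

section
/- Let Z be a k-dimensional random vector with finite first moments, τ ∈ (0,1), and u ∈ S^{k−1}. If (a,b) ∈ ℝ × ℝ^{k−1} minimizes Ψ_{τu}(a,b) := E[ρ_τ(u'Z − b'Γ_u'Z − a)] over ℝ × ℝ^{k−1}, then (a, c) with c := u − Γ_u b minimizes Ψ^c_{τu}(a,c) := E[ρ_τ(c'Z − a)] over the set M_u := {(a,c) ∈ ℝ × ℝ^k : u'c = 1}. Conversely, if (a,c) minimizes Ψ^c_{τu} over M_u, then (a, −Γ_u'c) minimizes Ψ_{τu} over ℝ × ℝ^{k−1}. -/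
open MeasureTheory Matrix ENNReal

/-- The quantile check function `ρ_τ`. -/
noncomputable def rho (τ x : ℝ) : ℝ := x * (τ - if x < 0 then 1 else 0)

/-- The objective function `Ψ_{τu}(a, b) = E[ρ_τ(u'Z − b'Γ_u'Z − a)]`. -/
noncomputable def Psi {k : ℕ} (μ : Measure (Fin (k + 1) → ℝ)) (τ : ℝ)
    (u : Fin (k + 1) → ℝ) (Γ : Matrix (Fin (k + 1)) (Fin k) ℝ)
    (a : ℝ) (b : Fin k → ℝ) : ℝ :=
  ∫ z, rho τ (u ⬝ᵥ z - b ⬝ᵥ (Γᵀ *ᵥ z) - a) ∂μ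

/-- The constrained-form objective `Ψ^c_{τu}(a, c) = E[ρ_τ(c'Z − a)]`. -/
noncomputable def PsiC {k : ℕ} (μ : Measure (Fin (k + 1) → ℝ)) (τ : ℝ)
    (a : ℝ) (c : Fin (k + 1) → ℝ) : ℝ :=
  ∫ z, rho τ (c ⬝ᵥ z - a) ∂μ

lemma Psi_eq_PsiC {k : ℕ} (μ : Measure (Fin (k + 1) → ℝ)) (τ : ℝ)
    (u : Fin (k + 1) → ℝ) (Γ : Matrix (Fin (k + 1)) (Fin k) ℝ) (a : ℝ) (b : Fin k → ℝ) :
    Psi μ τ u Γ a b = PsiC μ τ a (u - Γ *ᵥ b) := by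
  unfold Psi PsiC
  congr 1; funext z
  congr 1
  have : (u - Γ *ᵥ b) ⬝ᵥ z = u ⬝ᵥ z - (Γ *ᵥ b) ⬝ᵥ z := by
    simp [sub_dotProduct]
  rw [this]
  have h2 : (Γ *ᵥ b) ⬝ᵥ z = b ⬝ᵥ (Γᵀ *ᵥ z) := by
    simp only [dotProduct, Matrix.mulVec, Matrix.transpose_apply, Finset.sum_mul,
      Finset.mul_sum]
    rw [Finset.sum_comm]
    exact Finset.sum_congr rfl fun l _ => Finset.sum_congr rfl fun j _ => by ring
  rw [h2]

lemma key {k : ℕ} (u : Fin (k + 1) → ℝ) (hu : ∑ i, u i ^ 2 = 1)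
    (Γ : Matrix (Fin (k + 1)) (Fin k) ℝ) (hΓ : Γᵀ * Γ = 1) (hΓu : Γᵀ *ᵥ u = 0)
    (c : Fin (k + 1) → ℝ) : Γ *ᵥ (Γᵀ *ᵥ c) = c - (u ⬝ᵥ c) • u := by
  set A : Matrix (Fin (k + 1)) (Fin (k + 1)) ℝ :=
    Matrix.of (fun i => Fin.cons (u i) (Γ i)) with hA
  have hAtA : Aᵀ * A = 1 := by
    ext i j
    simp only [Matrix.mul_apply, Matrix.transpose_apply, hA, Matrix.of_apply]
    induction i using Fin.cases with
    | zero =>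
      induction j using Fin.cases with
      | zero =>
        simp only [Fin.cons_zero]
        have : ∑ l, u l * u l = 1 := by simpa [sq] using hu
        simp [this, Matrix.one_apply]
      | succ j =>
        simp only [Fin.cons_zero, Fin.cons_succ]
        have := congrFun hΓu j
        simp only [Matrix.mulVec, dotProduct, Matrix.transpose_apply,
          Pi.zero_apply] at this
        rw [Matrix.one_apply_ne (by simp [Fin.succ_ne_zero j, Ne.symm])]
        rw [← this]; exact Finset.sum_congr rfl (fun l _ => mul_comm _ _)
    | succ i =>
      induction j using Fin.cases with
      | zero =>
        simp only [Fin.cons_zero, Fin.cons_succ]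
        have := congrFun hΓu i
        simp only [Matrix.mulVec, dotProduct, Matrix.transpose_apply,
          Pi.zero_apply] at this
        rw [Matrix.one_apply_ne (Fin.succ_ne_zero i)]
        exact this
      | succ j =>
        simp only [Fin.cons_succ]
        have := congrFun (congrFun hΓ i) j
        simp only [Matrix.mul_apply, Matrix.transpose_apply] at this
        rw [this]
        by_cases h : i = j
        · subst h; simp [Matrix.one_apply]
        · rw [Matrix.one_apply_ne h, Matrix.one_apply_ne (by simp [h])]
  have hAAt : A * Aᵀ = 1 := mul_eq_one_comm.mp hAtA
  funext i
  have hentry : ∀ j, ∑ l, Γ i l * Γ j l = (if i = j then (1:ℝ) else 0) - u i * u j := by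
    intro j
    have := congrFun (congrFun hAAt i) j
    simp only [Matrix.mul_apply, Matrix.transpose_apply, hA, Matrix.of_apply] at this
    rw [Fin.sum_univ_succ] at this
    simp only [Fin.cons_zero, Fin.cons_succ] at this
    have h1 : Matrix.one_apply (i := i) (j := j) (α := ℝ) = _ := rfl
    rw [Matrix.one_apply] at this
    linarith [this]
  simp only [Matrix.mulVec, dotProduct, Matrix.transpose_apply, Pi.sub_apply,
    Pi.smul_apply, smul_eq_mul]
  calc ∑ j, Γ i j * ∑ l, Γ l j * c l
      = ∑ l, (∑ j, Γ i j * Γ l j) * c l := by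
        simp_rw [Finset.mul_sum, Finset.sum_mul]
        rw [Finset.sum_comm]
        exact Finset.sum_congr rfl fun l _ => Finset.sum_congr rfl fun j _ => by ring
    _ = ∑ l, ((if i = l then (1:ℝ) else 0) - u i * u l) * c l := by
        congr 1; funext l; rw [hentry l]
    _ = c i - (∑ l, u l * c l) * u i := by
        simp only [sub_mul, Finset.sum_sub_distrib, ite_mul, one_mul, zero_mul,
          Finset.sum_ite_eq, Finset.mem_univ, if_true]
        congr 1
        rw [Finset.sum_mul]
        exact Finset.sum_congr rfl fun l _ => by ring

theorem stmt1 {k : ℕ} (μ : Measure (Fin (k + 1) → ℝ)) [IsProbabilityMeasure μ]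
    (hmom : Integrable (fun z : Fin (k + 1) → ℝ => z) μ)
    (τ : ℝ) (hτ : τ ∈ Set.Ioo (0:ℝ) 1)
    (u : Fin (k + 1) → ℝ) (hu : ∑ i, u i ^ 2 = 1)
    (Γ : Matrix (Fin (k + 1)) (Fin k) ℝ) (hΓ : Γᵀ * Γ = 1) (hΓu : Γᵀ *ᵥ u = 0) :
    (∀ a : ℝ, ∀ b : Fin k → ℝ,
      (∀ a' : ℝ, ∀ b' : Fin k → ℝ, Psi μ τ u Γ a b ≤ Psi μ τ u Γ a' b') →
      (u ⬝ᵥ (u - Γ *ᵥ b) = 1 ∧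
        ∀ a' : ℝ, ∀ c' : Fin (k + 1) → ℝ, u ⬝ᵥ c' = 1 →
          PsiC μ τ a (u - Γ *ᵥ b) ≤ PsiC μ τ a' c')) ∧
    (∀ a : ℝ, ∀ c : Fin (k + 1) → ℝ, u ⬝ᵥ c = 1 →
      (∀ a' : ℝ, ∀ c' : Fin (k + 1) → ℝ, u ⬝ᵥ c' = 1 → PsiC μ τ a c ≤ PsiC μ τ a' c') →
      ∀ a' : ℝ, ∀ b' : Fin k → ℝ,
        Psi μ τ u Γ a (-(Γᵀ *ᵥ c)) ≤ Psi μ τ u Γ a' b') := by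
  have huu : u ⬝ᵥ u = 1 := by simpa [dotProduct, sq] using hu
  have hortho : ∀ b : Fin k → ℝ, u ⬝ᵥ (Γ *ᵥ b) = 0 := by
    intro b
    rw [Matrix.dotProduct_mulVec, ← Matrix.mulVec_transpose, hΓu, zero_dotProduct]
  constructor
  · intro a b hmin
    have h1 : u ⬝ᵥ (u - Γ *ᵥ b) = 1 := by
      rw [dotProduct_sub, huu, hortho, sub_zero]
    refine ⟨h1, fun a' c' hc' => ?_⟩
    rw [← Psi_eq_PsiC]
    have hc'' : u - Γ *ᵥ (-(Γᵀ *ᵥ c')) = c' := by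
      rw [Matrix.mulVec_neg, sub_neg_eq_add, key u hu Γ hΓ hΓu c',
        dotProduct_comm] at *
      rw [hc', one_smul]
      abel
    calc Psi μ τ u Γ a b ≤ Psi μ τ u Γ a' (-(Γᵀ *ᵥ c')) := hmin a' _
      _ = PsiC μ τ a' c' := by rw [Psi_eq_PsiC, hc'']
  · intro a c hc hmin a' b'
    have hc'' : u - Γ *ᵥ (-(Γᵀ *ᵥ c)) = c := by
      rw [Matrix.mulVec_neg, sub_neg_eq_add, key u hu Γ hΓ hΓu c,
        dotProduct_comm] at *
      rw [hc, one_smul]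
      abel
    rw [Psi_eq_PsiC, hc'', Psi_eq_PsiC]
    exact hmin a' _ (by rw [dotProduct_sub, huu, hortho, sub_zero])
end

section
/- Suppose the k-dimensional random vector Z satisfies Assumption (A), let τ ∈ (0,1), u ∈ S^{k−1}, and let (a_τ, b_τ) be the unique minimizer of Ψ_{τu}(a,b) := E[ρ_τ(u'Z − b'Γ_u'Z − a)] over ℝ × ℝ^{k−1}. Then the lower quantile halfspace H^−_τ := {z ∈ ℝ^k : u'z < b_τ'Γ_u'z + a_τ} satisfies P[Z ∈ H^−_τ] = τ. -/
open MeasureTheory Matrix ENNReal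

/-- Assumption (A): absolutely continuous distribution with a density whose support is
connected, and finite first-order moments. -/
def AssumptionA {k : ℕ} (μ : Measure (Fin (k + 1) → ℝ)) : Prop :=
  IsProbabilityMeasure μ ∧
    (∃ f : (Fin (k + 1) → ℝ) → ℝ, Measurable f ∧ (∀ z, 0 ≤ f z) ∧
      μ = volume.withDensity (fun z => ENNReal.ofReal (f z)) ∧
      IsConnected (Function.support f)) ∧
    Integrable (fun z : Fin (k + 1) → ℝ => z) μ

/-!
At a minimiser `a` of `t ↦ E ρ_τ(X − t)`, with `X = c'Z` and `c = u − Γ_u b`, comparing the loss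
at `a ± h` with the loss at `a` shows `P[X ≤ a − h] ≤ τ ≤ P[X ≤ a + h]` for every `h > 0`, so the
distribution function `F` of `X` satisfies `F(a−) ≤ τ ≤ F(a)`. Since `Γ_u'u = 0` we get `c'u = 1`,
so `{X = a}` is an affine hyperplane and hence Lebesgue-null; by absolute continuity `F` is
continuous at `a`, and `P[X < a] = F(a−) = τ`.
-/

open ProbabilityTheory Set
open scoped Pointwise

lemma rho_eq_mul_add_max (τ x : ℝ) : rho τ x = τ * x + max (-x) 0 := by
  unfold rho
  split_ifs with h
  · rw [max_eq_left (by linarith)]; ring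
  · rw [max_eq_right (by linarith)]; ring

lemma continuous_rho (τ : ℝ) : Continuous (rho τ) := by
  simp_rw [funext (rho_eq_mul_add_max τ)]
  fun_prop

lemma rho_sub_add_sub_rho_le (τ a x : ℝ) {h : ℝ} (hh : 0 ≤ h) :
    rho τ (x - (a + h)) - rho τ (x - a) ≤ h * ((Iic (a + h)).indicator 1 x - τ) := by
  simp only [rho_eq_mul_add_max, indicator_apply, mem_Iic, Pi.one_apply]
  split_ifs <;> grind

lemma rho_sub_sub_sub_rho_le (τ a x : ℝ) {h : ℝ} (hh : 0 ≤ h) :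
    rho τ (x - (a - h)) - rho τ (x - a) ≤ h * (τ - (Iic (a - h)).indicator 1 x) := by
  simp only [rho_eq_mul_add_max, indicator_apply, mem_Iic, Pi.one_apply]
  split_ifs <;> grind

noncomputable def checkLoss (ν : Measure ℝ) (τ t : ℝ) : ℝ := ∫ x, rho τ (x - t) ∂ν

section checkLoss

variable {ν : Measure ℝ}

lemma integrable_rho_sub [IsFiniteMeasure ν] (hν : Integrable id ν) (τ t : ℝ) :
    Integrable (fun x => rho τ (x - t)) ν := by
  have h := hν.sub (integrable_const t)
  simp_rw [rho_eq_mul_add_max]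
  exact (h.const_mul τ).add (h.neg.sup (integrable_zero ℝ ℝ ν))

lemma integrable_indicator_Iic_one [IsFiniteMeasure ν] (x : ℝ) :
    Integrable ((Iic x).indicator (1 : ℝ → ℝ)) ν :=
  (integrable_const (1 : ℝ)).indicator measurableSet_Iic

variable [IsProbabilityMeasure ν] {τ : ℝ}

lemma integral_indicator_Iic_one (x : ℝ) : ∫ y, (Iic x).indicator 1 y ∂ν = cdf ν x := by
  rw [integral_indicator_one measurableSet_Iic, cdf_eq_real]

lemma checkLoss_add_sub_checkLoss_le (hν : Integrable id ν) (a : ℝ) {h : ℝ} (hh : 0 ≤ h) :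
    checkLoss ν τ (a + h) - checkLoss ν τ a ≤ h * (cdf ν (a + h) - τ) := by
  have hint := (integrable_indicator_Iic_one (ν := ν) (a + h)).sub (integrable_const τ)
  calc checkLoss ν τ (a + h) - checkLoss ν τ a
      = ∫ x, (rho τ (x - (a + h)) - rho τ (x - a)) ∂ν :=
        (integral_sub (integrable_rho_sub hν τ _) (integrable_rho_sub hν τ a)).symm
    _ ≤ ∫ x, h * ((Iic (a + h)).indicator 1 x - τ) ∂ν :=
        integral_mono ((integrable_rho_sub hν τ _).sub (integrable_rho_sub hν τ a))
          (hint.const_mul h) fun x => rho_sub_add_sub_rho_le τ a x hh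
    _ = h * (cdf ν (a + h) - τ) := by
        rw [integral_const_mul, integral_sub (integrable_indicator_Iic_one _) (integrable_const τ),
          integral_indicator_Iic_one, integral_const]
        simp

lemma checkLoss_sub_sub_checkLoss_le (hν : Integrable id ν) (a : ℝ) {h : ℝ} (hh : 0 ≤ h) :
    checkLoss ν τ (a - h) - checkLoss ν τ a ≤ h * (τ - cdf ν (a - h)) := by
  have hint := (integrable_const τ).sub (integrable_indicator_Iic_one (ν := ν) (a - h))
  calc checkLoss ν τ (a - h) - checkLoss ν τ a
      = ∫ x, (rho τ (x - (a - h)) - rho τ (x - a)) ∂ν :=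
        (integral_sub (integrable_rho_sub hν τ _) (integrable_rho_sub hν τ a)).symm
    _ ≤ ∫ x, h * (τ - (Iic (a - h)).indicator 1 x) ∂ν :=
        integral_mono ((integrable_rho_sub hν τ _).sub (integrable_rho_sub hν τ a))
          (hint.const_mul h) fun x => rho_sub_sub_sub_rho_le τ a x hh
    _ = h * (τ - cdf ν (a - h)) := by
        rw [integral_const_mul, integral_sub (integrable_const τ) (integrable_indicator_Iic_one _),
          integral_indicator_Iic_one, integral_const]
        simp

variable {a : ℝ}

lemma le_cdf_of_isMinOn_checkLoss (hν : Integrable id ν)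
    (hmin : IsMinOn (checkLoss ν τ) univ a) : τ ≤ cdf ν a := by
  have hright : ∀ x > a, τ ≤ cdf ν x := fun x hx => by
    have hloss := checkLoss_add_sub_checkLoss_le (τ := τ) hν a (sub_pos.2 hx).le
    rw [add_sub_cancel] at hloss
    have := isMinOn_univ_iff.1 hmin x
    nlinarith
  refine ge_of_tendsto (((cdf ν).right_continuous a).mono Ioi_subset_Ici_self) ?_
  filter_upwards [self_mem_nhdsWithin] with x hx using hright x hx

lemma leftLim_cdf_le_of_isMinOn_checkLoss (hν : Integrable id ν)
    (hmin : IsMinOn (checkLoss ν τ) univ a) : Function.leftLim (cdf ν) a ≤ τ := by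
  have hleft : ∀ x < a, cdf ν x ≤ τ := fun x hx => by
    have hloss := checkLoss_sub_sub_checkLoss_le (τ := τ) hν a (sub_pos.2 hx).le
    rw [sub_sub_self] at hloss
    have := isMinOn_univ_iff.1 hmin x
    nlinarith
  refine le_of_tendsto ((cdf ν).mono.tendsto_leftLim a) ?_
  filter_upwards [self_mem_nhdsWithin] with x hx using hleft x hx

lemma measureReal_Iio_eq_of_isMinOn_checkLoss (hν : Integrable id ν)
    (hmin : IsMinOn (checkLoss ν τ) univ a) (ha : ν {a} = 0) : ν.real (Iio a) = τ := by
  have hcont : cdf ν a ≤ Function.leftLim (cdf ν) a := by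
    rw [← measure_cdf ν, StieltjesFunction.measure_singleton, ENNReal.ofReal_eq_zero] at ha
    linarith
  rw [measureReal_congr (Iio_ae_eq_Iic' ha), ← cdf_eq_real]
  exact le_antisymm (hcont.trans (leftLim_cdf_le_of_isMinOn_checkLoss hν hmin))
    (le_cdf_of_isMinOn_checkLoss hν hmin)

end checkLoss

lemma addHaar_preimage_singleton_eq_zero {E : Type*} [NormedAddCommGroup E] [NormedSpace ℝ E]
    [MeasurableSpace E] [BorelSpace E] [FiniteDimensional ℝ E] (μ : Measure E)
    [μ.IsAddHaarMeasure] {φ : E →ₗ[ℝ] ℝ} (hφ : φ ≠ 0) (a : ℝ) : μ (φ ⁻¹' {a}) = 0 := by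
  obtain ⟨p, hp⟩ := φ.surjective_or_eq_zero.resolve_right hφ a
  have hlevel : φ ⁻¹' {a} = p +ᵥ (LinearMap.ker φ : Set E) := by
    ext x
    simp only [mem_preimage, mem_singleton_iff, mem_vadd_set_iff_neg_vadd_mem, vadd_eq_add,
      SetLike.mem_coe, LinearMap.mem_ker, map_add, map_neg, hp, neg_add_eq_zero]
    exact eq_comm
  rw [hlevel, measure_vadd]
  exact Measure.addHaar_submodule μ _ (by rwa [Ne, LinearMap.ker_eq_top])

lemma sub_mulVec_dotProduct {m n R : Type*} [Fintype m] [Fintype n] [CommRing R]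
    (u z : m → R) (Γ : Matrix m n R) (b : n → R) :
    (u - Γ *ᵥ b) ⬝ᵥ z = u ⬝ᵥ z - b ⬝ᵥ (Γᵀ *ᵥ z) := by
  rw [sub_dotProduct, dotProduct_mulVec, vecMul_transpose]

lemma Psi_eq_checkLoss_map {k : ℕ} (μ : Measure (Fin (k + 1) → ℝ)) (τ : ℝ)
    (u : Fin (k + 1) → ℝ) (Γ : Matrix (Fin (k + 1)) (Fin k) ℝ) (a : ℝ) (b : Fin k → ℝ) :
    Psi μ τ u Γ a b = checkLoss (μ.map (dotProductBilin ℝ ℝ (u - Γ *ᵥ b))) τ a := by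
  have hφ : Measurable (dotProductBilin ℝ ℝ (u - Γ *ᵥ b)) :=
    (LinearMap.continuous_of_finiteDimensional _).measurable
  have hloss : Continuous fun x => rho τ (x - a) := (continuous_rho τ).comp (continuous_sub_right a)
  rw [checkLoss, integral_map hφ.aemeasurable hloss.aestronglyMeasurable]
  simp only [Psi, ← sub_mulVec_dotProduct]
  rfl

theorem stmt3_general {k : ℕ} (μ : Measure (Fin (k + 1) → ℝ))
    (hA : AssumptionA μ) (τ : ℝ)
    (u : Fin (k + 1) → ℝ) (hu : ∑ i, u i ^ 2 = 1)
    (Γ : Matrix (Fin (k + 1)) (Fin k) ℝ) (hΓu : Γᵀ *ᵥ u = 0)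
    (a : ℝ) (b : Fin k → ℝ)
    (hmin : ∀ a' : ℝ, ∀ b' : Fin k → ℝ, Psi μ τ u Γ a b ≤ Psi μ τ u Γ a' b') :
    (μ {z | u ⬝ᵥ z < b ⬝ᵥ (Γᵀ *ᵥ z) + a}).toReal = τ := by
  obtain ⟨hprob, ⟨f, -, -, hμ, -⟩, hZ⟩ := hA
  set φ := dotProductBilin ℝ ℝ (u - Γ *ᵥ b)
  have hφ : Continuous φ := φ.continuous_of_finiteDimensional
  have hφu : φ u = 1 := by
    change (u - Γ *ᵥ b) ⬝ᵥ u = 1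
    rw [sub_mulVec_dotProduct, hΓu, dotProduct_zero, sub_zero]
    simpa [dotProduct, sq] using hu
  have : IsProbabilityMeasure (μ.map φ) := Measure.isProbabilityMeasure_map hφ.aemeasurable
  have hν : Integrable id (μ.map φ) :=
    (integrable_map_measure aestronglyMeasurable_id hφ.aemeasurable).2
      (φ.toContinuousLinearMap.integrable_comp hZ)
  have hatom : μ.map φ {a} = 0 := by
    rw [Measure.map_apply hφ.measurable (measurableSet_singleton a)]
    refine (hμ ▸ withDensity_absolutelyContinuous _ _ : μ ≪ volume) ?_
    exact addHaar_preimage_singleton_eq_zero volume (fun h => by simp [h] at hφu) a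
  have hmin' : IsMinOn (checkLoss (μ.map φ) τ) univ a :=
    isMinOn_univ_iff.2 fun t => by simpa only [Psi_eq_checkLoss_map] using hmin t b
  rw [← measureReal_Iio_eq_of_isMinOn_checkLoss hν hmin' hatom, measureReal_def,
    Measure.map_apply hφ.measurable measurableSet_Iio]
  congr 2
  ext z
  change u ⬝ᵥ z < b ⬝ᵥ (Γᵀ *ᵥ z) + a ↔ (u - Γ *ᵥ b) ⬝ᵥ z < a
  rw [sub_mulVec_dotProduct, sub_lt_iff_lt_add']

theorem stmt3 {k : ℕ} (μ : Measure (Fin (k + 1) → ℝ))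
    (hA : AssumptionA μ) (τ : ℝ) (hτ : τ ∈ Set.Ioo (0:ℝ) 1)
    (u : Fin (k + 1) → ℝ) (hu : ∑ i, u i ^ 2 = 1)
    (Γ : Matrix (Fin (k + 1)) (Fin k) ℝ) (hΓ : Γᵀ * Γ = 1) (hΓu : Γᵀ *ᵥ u = 0)
    (a : ℝ) (b : Fin k → ℝ)
    (hmin : ∀ a' : ℝ, ∀ b' : Fin k → ℝ, Psi μ τ u Γ a b ≤ Psi μ τ u Γ a' b') :
    (μ {z | u ⬝ᵥ z < b ⬝ᵥ (Γᵀ *ᵥ z) + a}).toReal = τ :=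
  stmt3_general μ hA τ u hu Γ hΓu a b hmin
end

section
/- Suppose the k-dimensional random vector Z satisfies Assumption (A), let τ ∈ (0,1), u ∈ S^{k−1}, and let (a_τ, b_τ) be the unique minimizer of Ψ_{τu}(a,b) := E[ρ_τ(u'Z − b'Γ_u'Z − a)]. Writing H^−_τ := {z ∈ ℝ^k : u'z < b_τ'Γ_u'z + a_τ} and H^+_τ := {z ∈ ℝ^k : u'z ≥ b_τ'Γ_u'z + a_τ}, one has Γ_u' [ (1/(1−τ)) E[Z·1_{Z ∈ H^+_τ}] − (1/τ) E[Z·1_{Z ∈ H^−_τ}] ] = 0; equivalently, the straight line through the two probability mass centers (1/τ)E[Z·1_{Z ∈ H^−_τ}] and (1/(1−τ))E[Z·1_{Z ∈ H^+_τ}] is parallel to u. -/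
/-!
Write `X = u'Z - b'Γ'Z - a` and `ψ_τ(x) = τ - 1{x < 0}`, so that `ρ_τ(x) = x ψ_τ(x)`. Moving `b` to
`b + t v` changes `Ψ` to `E[ρ_τ(X - t v'Γ'Z)]`. Since `ρ_τ` is 1-Lipschitz and differentiable off
`0`, and `X ≠ 0` almost surely (the hyperplane `{X = 0}` has normal `u - Γb ≠ 0`, hence is
Lebesgue-null), we may differentiate under the expectation; minimality at `t = 0` gives
`Γ' E[ψ_τ(X) Z] = 0`. Finally `E[ψ_τ(X) Z] = τ E[Z 1{H⁺}] - (1 - τ) E[Z 1{H⁻}]`; divide by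
`τ(1 - τ)`.
-/

open MeasureTheory Matrix ENNReal

open Filter Set Topology

/-- `ψ_τ`, the derivative of `ρ_τ` off `0`; taking the right derivative at `0` makes it split
along `{x ≥ 0}` and `{x < 0}`, as `H⁺` and `H⁻` do. -/
noncomputable def rhoDeriv (τ x : ℝ) : ℝ := τ - if x < 0 then 1 else 0

section CheckFunction

variable {τ : ℝ}

lemma rho_eq_mul_rhoDeriv (x : ℝ) : rho τ x = x * rhoDeriv τ x := rfl

lemma measurable_rhoDeriv : Measurable (rhoDeriv τ) :=
  measurable_const.sub (Measurable.ite measurableSet_Iio measurable_const measurable_const)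

lemma abs_rhoDeriv_le (h0 : 0 ≤ τ) (h1 : τ ≤ 1) (x : ℝ) : |rhoDeriv τ x| ≤ 1 := by
  unfold rhoDeriv
  split_ifs <;> rw [abs_le] <;> constructor <;> linarith

lemma lipschitzWith_rho (h0 : 0 ≤ τ) (h1 : τ ≤ 1) : LipschitzWith 1 (rho τ) := by
  refine LipschitzWith.of_dist_le_mul fun x y => ?_
  simp only [Real.dist_eq, NNReal.coe_one, one_mul, rho]
  split_ifs <;> rw [abs_le] <;> constructor <;>
    rcases abs_cases (x - y) with ⟨h, h'⟩ | ⟨h, h'⟩ <;> nlinarith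

lemma eventually_rhoDeriv_eq {x : ℝ} (hx : x ≠ 0) : ∀ᶠ y in 𝓝 x, rhoDeriv τ y = rhoDeriv τ x := by
  rcases hx.lt_or_gt with h | h
  · filter_upwards [Iio_mem_nhds h] with y hy
    simp [rhoDeriv, h, mem_Iio.1 hy]
  · filter_upwards [Ioi_mem_nhds h] with y hy
    simp [rhoDeriv, not_lt.2 h.le, not_lt.2 (mem_Ioi.1 hy).le]

lemma hasDerivAt_rho {x : ℝ} (hx : x ≠ 0) : HasDerivAt (rho τ) (rhoDeriv τ x) x := by
  have hlin : HasDerivAt (fun y => y * rhoDeriv τ x) (rhoDeriv τ x) x := by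
    simpa using (hasDerivAt_id x).mul_const (rhoDeriv τ x)
  refine hlin.congr_of_eventuallyEq ?_
  filter_upwards [eventually_rhoDeriv_eq hx] with y hy
  rw [rho_eq_mul_rhoDeriv, hy]

end CheckFunction

section FirstOrderCondition

variable {Ω : Type*} [MeasurableSpace Ω] {μ : Measure Ω} {τ : ℝ}

lemma MeasureTheory.Integrable.rhoDeriv_smul {E : Type*} [NormedAddCommGroup E] [NormedSpace ℝ E]
    (h0 : 0 ≤ τ) (h1 : τ ≤ 1) {X : Ω → ℝ} (hX : AEMeasurable X μ) {f : Ω → E}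
    (hf : Integrable f μ) : Integrable (fun ω => rhoDeriv τ (X ω) • f ω) μ :=
  hf.bdd_smul 1 (measurable_rhoDeriv.comp_aemeasurable hX).aestronglyMeasurable
    (Eventually.of_forall fun ω => abs_rhoDeriv_le h0 h1 (X ω))

theorem integral_rhoDeriv_mul_eq_zero_of_isLocalMin (h0 : 0 ≤ τ) (h1 : τ ≤ 1) {X H : Ω → ℝ}
    (hX : Integrable X μ) (hH : Integrable H μ) (hX0 : ∀ᵐ ω ∂μ, X ω ≠ 0)
    (hmin : IsLocalMin (fun t : ℝ => ∫ ω, rho τ (X ω - t * H ω) ∂μ) 0) :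
    ∫ ω, rhoDeriv τ (X ω) * H ω ∂μ = 0 := by
  have hlip := lipschitzWith_rho h0 h1
  have hmeas : ∀ t : ℝ, AEStronglyMeasurable (fun ω => rho τ (X ω - t * H ω)) μ := fun t =>
    hlip.continuous.comp_aestronglyMeasurable (hX.1.sub (hH.1.const_mul t))
  have hint : Integrable (fun ω => rho τ (X ω - 0 * H ω)) μ := by
    simpa [Function.comp_def] using
      memLp_one_iff_integrable.1 (hlip.comp_memLp (by simp [rho]) (memLp_one_iff_integrable.2 hX))
  have hlipω : ∀ ω, LipschitzOnWith (Real.nnabs |H ω|) (fun t => rho τ (X ω - t * H ω)) univ := by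
    intro ω
    refine (LipschitzWith.of_dist_le_mul fun t s => ?_).lipschitzOnWith
    calc dist (rho τ (X ω - t * H ω)) (rho τ (X ω - s * H ω))
        ≤ dist (X ω - t * H ω) (X ω - s * H ω) := by
          simpa only [NNReal.coe_one, one_mul] using hlip.dist_le_mul _ _
      _ = Real.nnabs |H ω| * dist t s := by
        rw [Real.dist_eq, Real.dist_eq, Real.coe_nnabs, abs_abs, ← abs_mul, ← abs_neg]
        congr 1
        ring
  have hdiff : ∀ᵐ ω ∂μ,
      HasDerivAt (fun t => rho τ (X ω - t * H ω)) (rhoDeriv τ (X ω) * -H ω) 0 := by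
    filter_upwards [hX0] with ω hω
    have hline : HasDerivAt (fun t => X ω - t * H ω) (-H ω) 0 := by
      simpa using ((hasDerivAt_id (0 : ℝ)).mul_const (H ω)).const_sub (X ω)
    simpa [Function.comp_def] using
      (hasDerivAt_rho (τ := τ) (x := X ω - 0 * H ω) (by simpa using hω)).comp 0 hline
  have hderiv := (hasDerivAt_integral_of_dominated_loc_of_lip univ_mem
    (Eventually.of_forall hmeas) hint
    ((measurable_rhoDeriv.comp_aemeasurable hX.aemeasurable).aestronglyMeasurable.mul hH.1.neg)
    (Eventually.of_forall hlipω) hH.abs hdiff).2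
  simpa [integral_neg] using hmin.hasDerivAt_eq_zero hderiv

theorem integral_rhoDeriv_smul_eq_zero {ι : Type*} [Fintype ι] (h0 : 0 ≤ τ) (h1 : τ ≤ 1)
    {X : Ω → ℝ} {Y : Ω → ι → ℝ} (hX : Integrable X μ) (hY : Integrable Y μ)
    (hX0 : ∀ᵐ ω ∂μ, X ω ≠ 0)
    (hmin : ∀ v : ι → ℝ, ∫ ω, rho τ (X ω) ∂μ ≤ ∫ ω, rho τ (X ω - v ⬝ᵥ Y ω) ∂μ) :
    ∫ ω, rhoDeriv τ (X ω) • Y ω ∂μ = 0 := by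
  classical
  ext j
  rw [eval_integral fun i => (hY.rhoDeriv_smul h0 h1 hX.aemeasurable).eval i]
  refine integral_rhoDeriv_mul_eq_zero_of_isLocalMin h0 h1 hX (hY.eval j) hX0
    (Eventually.of_forall fun t => ?_)
  simpa [single_dotProduct] using hmin (Pi.single j t)

theorem integral_rhoDeriv_smul_eq_sub {E : Type*} [NormedAddCommGroup E] [NormedSpace ℝ E]
    {X : Ω → ℝ} (hX : Measurable X) {f : Ω → E} (hf : Integrable f μ) :
    ∫ ω, rhoDeriv τ (X ω) • f ω ∂μ =
      τ • ∫ ω, {ω | 0 ≤ X ω}.indicator f ω ∂μ - (1 - τ) • ∫ ω, {ω | X ω < 0}.indicator f ω ∂μ := by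
  rw [← integral_smul, ← integral_smul, ← integral_sub]
  · congr 1 with ω
    by_cases h : X ω < 0
    · simp [rhoDeriv, h, not_le.2 h, sub_smul]
    · simp [rhoDeriv, h, not_lt.1 h]
  · exact (hf.indicator (measurableSet_le measurable_const hX)).smul τ
  · exact (hf.indicator (measurableSet_lt hX measurable_const)).smul (1 - τ)

end FirstOrderCondition

lemma volume_setOf_dotProduct_eq {ι : Type*} [Fintype ι] {w : ι → ℝ} (hw : w ≠ 0) (c : ℝ) :
    volume {z : ι → ℝ | w ⬝ᵥ z = c} = 0 := by
  have hww : w ⬝ᵥ w ≠ 0 := dotProduct_self_eq_zero.not.2 hw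
  set p : ι → ℝ := (c / (w ⬝ᵥ w)) • w
  have hp : w ⬝ᵥ p = c := by simp [p, dotProduct_smul, hww]
  set s := AffineSubspace.mk' p (LinearMap.ker (dotProductBilin ℝ ℝ w))
  have hs : (s : Set (ι → ℝ)) = {z | w ⬝ᵥ z = c} := by
    ext z
    simp [s, AffineSubspace.mem_mk', dotProduct_sub, hp, sub_eq_zero]
  rw [← hs]
  refine Measure.addHaar_affineSubspace _ s fun htop => hww ?_
  have hw_mem : w ∈ (⊤ : AffineSubspace ℝ (ι → ℝ)).direction := by simp
  rw [← htop, AffineSubspace.direction_mk', LinearMap.mem_ker] at hw_mem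
  simpa using hw_mem

lemma ae_dotProduct_ne {ι : Type*} [Fintype ι] {μ : Measure (ι → ℝ)} (hμ : μ ≪ volume)
    {w : ι → ℝ} (hw : w ≠ 0) (c : ℝ) : ∀ᵐ z ∂μ, w ⬝ᵥ z ≠ c := by
  rw [ae_iff]
  simpa using hμ (volume_setOf_dotProduct_eq hw c)

noncomputable def quantileResidual {m n : Type*} [Fintype m] [Fintype n] (u : m → ℝ)
    (Γ : Matrix m n ℝ) (a : ℝ) (b : n → ℝ) (z : m → ℝ) : ℝ :=
  u ⬝ᵥ z - b ⬝ᵥ (Γᵀ *ᵥ z) - a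

section Residual

variable {m n : Type*} [Fintype m] [Fintype n] {u : m → ℝ} {Γ : Matrix m n ℝ} {a : ℝ} {b : n → ℝ}

lemma quantileResidual_eq_dotProduct_sub (z : m → ℝ) :
    quantileResidual u Γ a b z = (u - Γ *ᵥ b) ⬝ᵥ z - a := by
  simp only [quantileResidual, sub_dotProduct, dotProduct_mulVec, vecMul_transpose]

lemma continuous_quantileResidual : Continuous (quantileResidual u Γ a b) := by
  unfold quantileResidual
  fun_prop

lemma setOf_le_eq_setOf_quantileResidual_nonneg :
    {z | b ⬝ᵥ (Γᵀ *ᵥ z) + a ≤ u ⬝ᵥ z} = {z | 0 ≤ quantileResidual u Γ a b z} := by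
  ext z
  simp [quantileResidual, sub_sub, sub_nonneg]

lemma setOf_lt_eq_setOf_quantileResidual_neg :
    {z | u ⬝ᵥ z < b ⬝ᵥ (Γᵀ *ᵥ z) + a} = {z | quantileResidual u Γ a b z < 0} := by
  ext z
  simp [quantileResidual, sub_sub, sub_neg]

lemma ae_quantileResidual_ne_zero {μ : Measure (m → ℝ)} (hμ : μ ≪ volume) (hu : u ≠ 0)
    (hΓu : Γᵀ *ᵥ u = 0) : ∀ᵐ z ∂μ, quantileResidual u Γ a b z ≠ 0 := by
  have hw : (u - Γ *ᵥ b) ⬝ᵥ u ≠ 0 := by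
    rw [sub_dotProduct, ← vecMul_transpose, ← dotProduct_mulVec, hΓu, dotProduct_zero, sub_zero]
    exact dotProduct_self_eq_zero.not.2 hu
  filter_upwards [ae_dotProduct_ne hμ (w := u - Γ *ᵥ b) (by rintro h; simp [h] at hw) a] with z hz
  rwa [quantileResidual_eq_dotProduct_sub, sub_ne_zero]

lemma integrable_quantileResidual {μ : Measure (m → ℝ)} [IsFiniteMeasure μ]
    (hint : Integrable (fun z : m → ℝ => z) μ) : Integrable (quantileResidual u Γ a b) μ := by
  refine (((dotProductBilin ℝ ℝ (u - Γ *ᵥ b)).toContinuousLinearMap.integrable_comp hint).sub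
    (integrable_const a)).congr (Eventually.of_forall fun z => ?_)
  simp [quantileResidual_eq_dotProduct_sub]

end Residual

lemma Psi_add {k : ℕ} (μ : Measure (Fin (k + 1) → ℝ)) (τ : ℝ) (u : Fin (k + 1) → ℝ)
    (Γ : Matrix (Fin (k + 1)) (Fin k) ℝ) (a : ℝ) (b v : Fin k → ℝ) :
    Psi μ τ u Γ a (b + v) = ∫ z, rho τ (quantileResidual u Γ a b z - v ⬝ᵥ (Γᵀ *ᵥ z)) ∂μ := by
  unfold Psi quantileResidual
  congr 1 with z
  rw [add_dotProduct]
  congr 1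
  ring

lemma mulVec_integral {Ω : Type*} [MeasurableSpace Ω] {μ : Measure Ω} {m n : Type*} [Fintype m]
    [Fintype n] (M : Matrix m n ℝ) {g : Ω → n → ℝ} (hg : Integrable g μ) :
    M *ᵥ ∫ ω, g ω ∂μ = ∫ ω, M *ᵥ g ω ∂μ :=
  ((Matrix.mulVecLin M).toContinuousLinearMap.integral_comp_comm hg).symm

theorem stmt4_general {k : ℕ} (μ : Measure (Fin (k + 1) → ℝ))
    (hA : AssumptionA μ) (τ : ℝ) (hτ : τ ∈ Set.Ioo (0:ℝ) 1)
    (u : Fin (k + 1) → ℝ) (hu : ∑ i, u i ^ 2 = 1)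
    (Γ : Matrix (Fin (k + 1)) (Fin k) ℝ) (hΓu : Γᵀ *ᵥ u = 0)
    (a : ℝ) (b : Fin k → ℝ)
    (hmin : ∀ a' : ℝ, ∀ b' : Fin k → ℝ, Psi μ τ u Γ a b ≤ Psi μ τ u Γ a' b') :
    Γᵀ *ᵥ ((1 / (1 - τ)) •
        (∫ z, Set.indicator {z | b ⬝ᵥ (Γᵀ *ᵥ z) + a ≤ u ⬝ᵥ z} (fun z => z) z ∂μ) -
      (1 / τ) •
        (∫ z, Set.indicator {z | u ⬝ᵥ z < b ⬝ᵥ (Γᵀ *ᵥ z) + a} (fun z => z) z ∂μ)) = 0 := by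
  obtain ⟨hprob, ⟨f, -, -, hμ, -⟩, hint⟩ := hA
  obtain ⟨hτ0, hτ1⟩ := hτ
  set X := quantileResidual u Γ a b
  have hX0 : ∀ᵐ z ∂μ, X z ≠ 0 :=
    ae_quantileResidual_ne_zero (hμ ▸ withDensity_absolutelyContinuous _ _)
      (by rintro rfl; simp at hu) hΓu
  have hgrad : ∫ z, rhoDeriv τ (X z) • (Γᵀ *ᵥ z) ∂μ = 0 :=
    integral_rhoDeriv_smul_eq_zero hτ0.le hτ1.le (integrable_quantileResidual hint)
      ((Matrix.mulVecLin Γᵀ).toContinuousLinearMap.integrable_comp hint) hX0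
      fun v => (Psi_add μ τ u Γ a b v).subst (hmin a (b + v))
  have hcentre : Γᵀ *ᵥ ∫ z, rhoDeriv τ (X z) • z ∂μ = 0 := by
    rw [mulVec_integral _
      (hint.rhoDeriv_smul hτ0.le hτ1.le continuous_quantileResidual.aemeasurable)]
    simpa only [mulVec_smul] using hgrad
  rw [integral_rhoDeriv_smul_eq_sub continuous_quantileResidual.measurable hint] at hcentre
  rw [setOf_le_eq_setOf_quantileResidual_nonneg, setOf_lt_eq_setOf_quantileResidual_neg]
  set Iplus := ∫ z, {z | 0 ≤ X z}.indicator (fun z => z) z ∂μ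
  set Iminus := ∫ z, {z | X z < 0}.indicator (fun z => z) z ∂μ
  have hscale : (1 / (1 - τ)) • Iplus - (1 / τ) • Iminus =
      (τ * (1 - τ))⁻¹ • (τ • Iplus - (1 - τ) • Iminus) := by
    rw [smul_sub, smul_smul, smul_smul]
    congr 2 <;> field_simp [hτ0.ne', (sub_pos.2 hτ1).ne']
  rw [hscale, mulVec_smul, hcentre, smul_zero]

theorem stmt4 {k : ℕ} (μ : Measure (Fin (k + 1) → ℝ))
    (hA : AssumptionA μ) (τ : ℝ) (hτ : τ ∈ Set.Ioo (0:ℝ) 1)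
    (u : Fin (k + 1) → ℝ) (hu : ∑ i, u i ^ 2 = 1)
    (Γ : Matrix (Fin (k + 1)) (Fin k) ℝ) (hΓ : Γᵀ * Γ = 1) (hΓu : Γᵀ *ᵥ u = 0)
    (a : ℝ) (b : Fin k → ℝ)
    (hmin : ∀ a' : ℝ, ∀ b' : Fin k → ℝ, Psi μ τ u Γ a b ≤ Psi μ τ u Γ a' b') :
    Γᵀ *ᵥ ((1 / (1 - τ)) •
        (∫ z, Set.indicator {z | b ⬝ᵥ (Γᵀ *ᵥ z) + a ≤ u ⬝ᵥ z} (fun z => z) z ∂μ) -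
      (1 / τ) •
        (∫ z, Set.indicator {z | u ⬝ᵥ z < b ⬝ᵥ (Γᵀ *ᵥ z) + a} (fun z => z) z ∂μ)) = 0 :=
  stmt4_general μ hA τ hτ u hu Γ hΓu a b hmin
end

section
/- Let H be a symmetric real (k+1)×(k+1) matrix, J a real (k+1)×k matrix with J'J = I_k, and v ∈ ℝ^{k+1} a nonzero vector with Hv = 0 and J'v = 0, and suppose the k×k matrix J'HJ is invertible. Then G := J(J'HJ)^{−1}J' is the Moore–Penrose pseudoinverse of H, i.e., (i) GHG = G, (ii) HGH = H, (iii) (GH)' = GH, and (iv) (HG)' = HG. -/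
open Matrix

theorem stmt14 {k : ℕ} (H : Matrix (Fin (k + 1)) (Fin (k + 1)) ℝ)
    (J : Matrix (Fin (k + 1)) (Fin k) ℝ) (v : Fin (k + 1) → ℝ)
    (hH : Hᵀ = H) (hJ : Jᵀ * J = 1)
    (hv : v ≠ 0) (hHv : H *ᵥ v = 0) (hJv : Jᵀ *ᵥ v = 0)
    (hinv : IsUnit (Jᵀ * H * J)) :
    J * (Jᵀ * H * J)⁻¹ * Jᵀ * H * (J * (Jᵀ * H * J)⁻¹ * Jᵀ) = J * (Jᵀ * H * J)⁻¹ * Jᵀ ∧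
    H * (J * (Jᵀ * H * J)⁻¹ * Jᵀ) * H = H ∧
    (J * (Jᵀ * H * J)⁻¹ * Jᵀ * H)ᵀ = J * (Jᵀ * H * J)⁻¹ * Jᵀ * H ∧
    (H * (J * (Jᵀ * H * J)⁻¹ * Jᵀ))ᵀ = H * (J * (Jᵀ * H * J)⁻¹ * Jᵀ) := by
  -- rank of Jᵀ is k
  have hrk : (Jᵀ : Matrix (Fin k) (Fin (k+1)) ℝ).rank = k := by
    have h1 : (Jᵀ * J).rank ≤ Jᵀ.rank := Matrix.rank_mul_le_left _ _
    rw [hJ, Matrix.rank_one] at h1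
    simp only [Fintype.card_fin] at h1
    have h2 := Matrix.rank_le_card_height Jᵀ
    simp only [Fintype.card_fin] at h2
    omega
  -- kernel of Jᵀ has dimension 1
  have hker : Module.finrank ℝ (LinearMap.ker (Jᵀ : Matrix (Fin k) (Fin (k+1)) ℝ).mulVecLin) = 1 := by
    have := LinearMap.finrank_range_add_finrank_ker (Jᵀ : Matrix (Fin k) (Fin (k+1)) ℝ).mulVecLin
    rw [show Module.finrank ℝ (LinearMap.range (Jᵀ).mulVecLin) = Jᵀ.rank from rfl, hrk] at this
    simp only [Module.finrank_pi, Fintype.card_fin] at this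
    omega
  -- kernel = span v
  have hspan : Submodule.span ℝ {v} = LinearMap.ker (Jᵀ : Matrix (Fin k) (Fin (k+1)) ℝ).mulVecLin := by
    apply Submodule.eq_of_le_of_finrank_eq
    · rw [Submodule.span_le, Set.singleton_subset_iff]
      exact hJv
    · rw [finrank_span_singleton hv, hker]
  -- H * J * Jᵀ = H
  have key : H * J * Jᵀ = H := by
    ext i j
    have hx : (Pi.single j 1 - J *ᵥ (Jᵀ *ᵥ Pi.single j 1)) ∈
        LinearMap.ker (Jᵀ : Matrix (Fin k) (Fin (k+1)) ℝ).mulVecLin := by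
      simp only [LinearMap.mem_ker, Matrix.mulVecLin_apply, Matrix.mulVec_sub,
        Matrix.mulVec_mulVec, ← Matrix.mul_assoc]
      rw [hJ, Matrix.one_mul, sub_self]
    rw [← hspan, Submodule.mem_span_singleton] at hx
    obtain ⟨c, hc⟩ := hx
    have h0 : H *ᵥ (Pi.single j 1 - J *ᵥ (Jᵀ *ᵥ Pi.single j 1)) = 0 := by
      rw [← hc, Matrix.mulVec_smul, hHv, smul_zero]
    rw [Matrix.mulVec_sub, sub_eq_zero] at h0
    have := congrFun h0 i
    simp only [Matrix.mulVec_mulVec] at this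
    have h1 : (H * (J * Jᵀ)) i j = ((H * (J * Jᵀ)) *ᵥ Pi.single j 1) i := by
      rw [Matrix.mulVec_single]; simp
    have h2 : H i j = (H *ᵥ Pi.single j 1) i := by
      rw [Matrix.mulVec_single]; simp
    rw [Matrix.mul_assoc, h1, h2, this]
  -- symmetric version: J * Jᵀ * H = H
  have key' : J * Jᵀ * H = H := by
    have := congrArg Matrix.transpose key
    rwa [Matrix.transpose_mul, Matrix.transpose_mul, Matrix.transpose_transpose, hH,
      ← Matrix.mul_assoc] at this
  set M := Jᵀ * H * J with hM
  have hMdet : IsUnit M.det := (Matrix.isUnit_iff_isUnit_det M).mp hinv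
  have hMl : M⁻¹ * M = 1 := Matrix.nonsing_inv_mul M hMdet
  have hMr : M * M⁻¹ = 1 := Matrix.mul_nonsing_inv M hMdet
  have hJH : Jᵀ * H = M * Jᵀ := by
    rw [hM, Matrix.mul_assoc, Matrix.mul_assoc, ← Matrix.mul_assoc H, key]
  have hHJ : H * J = J * M := by
    rw [hM, ← Matrix.mul_assoc, ← Matrix.mul_assoc, key']
  have hGH : J * M⁻¹ * Jᵀ * H = J * Jᵀ := by
    rw [Matrix.mul_assoc, hJH, ← Matrix.mul_assoc, Matrix.mul_assoc J, hMl, Matrix.mul_one]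
  have hHG : H * (J * M⁻¹ * Jᵀ) = J * Jᵀ := by
    rw [← Matrix.mul_assoc, ← Matrix.mul_assoc, hHJ, Matrix.mul_assoc J, hMr, Matrix.mul_one]
  refine ⟨?_, ?_, ?_, ?_⟩
  · rw [hGH, ← Matrix.mul_assoc, ← Matrix.mul_assoc, Matrix.mul_assoc J Jᵀ J, hJ,
      Matrix.mul_one]
  · rw [hHG]; exact key'
  · rw [hGH, Matrix.transpose_mul, Matrix.transpose_transpose]
  · rw [hHG, Matrix.transpose_mul, Matrix.transpose_transpose]
end

section
/- Let Z_1, ..., Z_n be n ≥ k+1 points of ℝ^k in general position (no hyperplane of ℝ^k contains more than k of them). For τ ∈ (0,1), define the empirical quantile region R^{(n)}(τ) as the intersection, over all u ∈ S^{k−1} and over all minimizers (a,b) of Ψ^{(n)}_{τu}(a,b) := (1/n) Σ_{i=1}^n ρ_τ(u'Z_i − b'Γ_u'Z_i − a), of the closed upper halfspaces {z ∈ ℝ^k : u'z ≥ b'Γ_u'z + a}. Define the empirical halfspace depth HD_n(z) := min{#{i : Z_i ∈ H}/n : H a closed halfspace containing z} and D^{(n)}(t) := {z ∈ ℝ^k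 : HD_n(z) ≥ t}. Then for any ℓ ∈ {1, 2, ..., n−k} such that D^{(n)}(ℓ/n) has nonempty interior, R^{(n)}(τ) = D^{(n)}(ℓ/n) for all positive τ in [(ℓ−1)/n, ℓ/n). -/
open MeasureTheory Matrix ENNReal
open scoped Classical

/-- The empirical objective function `Ψ^{(n)}_{τu}(a, b)`. -/
noncomputable def PsiEmp {k n : ℕ} (Z : Fin n → (Fin (k + 1) → ℝ)) (τ : ℝ)
    (u : Fin (k + 1) → ℝ) (Γ : Matrix (Fin (k + 1)) (Fin k) ℝ)
    (a : ℝ) (b : Fin k → ℝ) : ℝ :=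
  (1 / (n : ℝ)) * ∑ i, rho τ (u ⬝ᵥ Z i - b ⬝ᵥ (Γᵀ *ᵥ Z i) - a)

/-- Empirical halfspace depth: the minimum, over closed halfspaces `H` containing `z`,
of the proportion of data points lying in `H`. -/
noncomputable def empDepth {k n : ℕ} (Z : Fin n → (Fin (k + 1) → ℝ))
    (z : Fin (k + 1) → ℝ) : ℝ :=
  sInf {r : ℝ | ∃ v : Fin (k + 1) → ℝ, ∃ c : ℝ, v ≠ 0 ∧ c ≤ v ⬝ᵥ z ∧
    r = ((Finset.univ.filter fun i => c ≤ v ⬝ᵥ Z i).card : ℝ) / n}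

/-- The empirical halfspace depth region of order `t`. -/
noncomputable def empDepthRegion {k n : ℕ} (Z : Fin n → (Fin (k + 1) → ℝ)) (t : ℝ) :
    Set (Fin (k + 1) → ℝ) :=
  {z | t ≤ empDepth Z z}

/-- The empirical quantile region `R^{(n)}(τ)`: intersection of all upper empirical
`τu`-quantile halfspaces, over all directions `u`, all admissible `Γ_u`, and all
minimizers of the empirical objective. -/
def empQuantileRegion {k n : ℕ} (Z : Fin n → (Fin (k + 1) → ℝ)) (τ : ℝ) :
    Set (Fin (k + 1) → ℝ) :=
  {z | ∀ u : Fin (k + 1) → ℝ, ∀ Γ : Matrix (Fin (k + 1)) (Fin k) ℝ, ∀ a : ℝ, ∀ b : Fin k → ℝ,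
    (∑ i, u i ^ 2 = 1) → Γᵀ * Γ = 1 → Γᵀ *ᵥ u = 0 →
    (∀ a' : ℝ, ∀ b' : Fin k → ℝ, PsiEmp Z τ u Γ a b ≤ PsiEmp Z τ u Γ a' b') →
    b ⬝ᵥ (Γᵀ *ᵥ z) + a ≤ u ⬝ᵥ z}

open scoped Finset

/-!
Both inclusions come from the first-order conditions of the check loss. If `z` violates the upper
halfspace of a minimizer `(a, b)` in direction `u`, every data point of the closed halfspace
through `z` parallel to its boundary has a negative residual; a minimizer has at most `τ n`
negative residuals, fewer than `ℓ`, so `z` has depth below `ℓ / n`.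

Conversely, let a closed halfspace `{x | c ≤ v ⬝ᵥ x}` containing `z` hold fewer than `ℓ` data
points. After perturbing `v` into a generic direction, let `s` be the `ℓ`-th largest of the values
`v ⬝ᵥ Z i`, so that `s < v ⬝ᵥ z`. The weights `τ - 1` above the hyperplane `v ⬝ᵥ x = s`, `τ`
below it and a suitable constant on it are subgradients of the check loss summing to zero, and by
genericity their moment vector is zero or not orthogonal to `v`. Taking `u` along that moment
vector, the hyperplane is an empirical `τu`-quantile hyperplane whose upper halfspace misses `z`.
-/

lemma rho_of_nonneg (τ : ℝ) {x : ℝ} (hx : 0 ≤ x) : rho τ x = τ * x := by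
  simp [rho, not_lt.mpr hx, mul_comm]

lemma rho_of_nonpos (τ : ℝ) {x : ℝ} (hx : x ≤ 0) : rho τ x = (τ - 1) * x := by
  rcases hx.lt_or_eq with hx | rfl
  · simp [rho, hx, mul_comm]
  · simp [rho]

lemma rho_eq_max (τ x : ℝ) : rho τ x = max (τ * x) ((τ - 1) * x) := by
  rcases le_total 0 x with hx | hx
  · rw [rho_of_nonneg τ hx, max_eq_left (by nlinarith)]
  · rw [rho_of_nonpos τ hx, max_eq_right (by nlinarith)]

lemma rho_add_mul_sub_le {τ x g : ℝ} (hneg : x < 0 → g = τ - 1) (hpos : 0 < x → g = τ)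
    (hg : g ∈ Set.Icc (τ - 1) τ) (y : ℝ) : rho τ x + g * (y - x) ≤ rho τ y := by
  rw [rho_eq_max τ y]
  rcases lt_trichotomy x 0 with hx | rfl | hx
  · rw [rho_of_nonpos τ hx.le, hneg hx]
    exact le_max_of_le_right (by ring_nf; rfl)
  · rcases le_total 0 y with hy | hy
    · exact le_max_of_le_left (by simp [rho]; nlinarith [hg.2])
    · exact le_max_of_le_right (by simp [rho]; nlinarith [hg.1])
  · rw [rho_of_nonneg τ hx.le, hpos hx]
    exact le_max_of_le_left (by ring_nf; rfl)

lemma sum_rho_le_of_subgradient {ι : Type*} [Fintype ι] {τ : ℝ} (r r' g : ι → ℝ)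
    (hneg : ∀ i, r i < 0 → g i = τ - 1) (hpos : ∀ i, 0 < r i → g i = τ)
    (hg : ∀ i, g i ∈ Set.Icc (τ - 1) τ) (horth : ∑ i, g i * (r' i - r i) = 0) :
    ∑ i, rho τ (r i) ≤ ∑ i, rho τ (r' i) :=
  calc ∑ i, rho τ (r i) = ∑ i, (rho τ (r i) + g i * (r' i - r i)) := by
        rw [Finset.sum_add_distrib, horth, add_zero]
    _ ≤ ∑ i, rho τ (r' i) :=
        Finset.sum_le_sum fun i _ => rho_add_mul_sub_le (hneg i) (hpos i) (hg i) (r' i)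

lemma card_neg_le_of_sum_rho_le {ι : Type*} [Fintype ι] {τ : ℝ} (r : ι → ℝ)
    (hmin : ∀ t, ∑ i, rho τ (r i) ≤ ∑ i, rho τ (r i + t)) :
    (#{i | r i < 0} : ℝ) ≤ τ * Fintype.card ι := by
  obtain ⟨t, ht, hshift⟩ : ∃ t > 0, ∀ i, r i < 0 → r i + t ≤ 0 := by
    by_cases h : ∃ i, r i < 0
    · obtain ⟨i, hi⟩ := h
      obtain ⟨j, hj, hjmin⟩ := Finset.exists_min_image {i | r i < 0} (fun i => -r i) ⟨i, by simpa⟩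
      rw [Finset.mem_filter] at hj
      exact ⟨-r j, by linarith [hj.2], fun i hi => by linarith [hjmin i (by simpa)]⟩
    · exact ⟨1, one_pos, fun i hi => absurd ⟨i, hi⟩ h⟩
  have hstep : ∀ i, rho τ (r i + t) = rho τ (r i) + t * (τ - if r i < 0 then 1 else 0) := by
    intro i
    by_cases hi : r i < 0
    · rw [rho_of_nonpos τ (hshift i hi), rho_of_nonpos τ hi.le, if_pos hi]; ring
    · rw [not_lt] at hi
      rw [rho_of_nonneg τ (by linarith), rho_of_nonneg τ hi, if_neg hi.not_gt]; ring
  have := hmin t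
  simp only [hstep, Finset.sum_add_distrib, ← Finset.mul_sum, Finset.sum_sub_distrib,
    Finset.sum_boole, Finset.sum_const, Finset.card_univ, nsmul_eq_mul] at this
  nlinarith

section PsiEmp

variable {k n : ℕ} (Z : Fin n → (Fin (k + 1) → ℝ)) {τ : ℝ}
  (u : Fin (k + 1) → ℝ) (Γ : Matrix (Fin (k + 1)) (Fin k) ℝ) (a : ℝ) (b : Fin k → ℝ)

lemma PsiEmp_le_of_subgradient (g : Fin n → ℝ)
    (hneg : ∀ i, u ⬝ᵥ Z i - b ⬝ᵥ (Γᵀ *ᵥ Z i) - a < 0 → g i = τ - 1)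
    (hpos : ∀ i, 0 < u ⬝ᵥ Z i - b ⬝ᵥ (Γᵀ *ᵥ Z i) - a → g i = τ)
    (hg : ∀ i, g i ∈ Set.Icc (τ - 1) τ) (hsum : ∑ i, g i = 0)
    (hmom : ∑ i, g i • (Γᵀ *ᵥ Z i) = 0) (a' : ℝ) (b' : Fin k → ℝ) :
    PsiEmp Z τ u Γ a b ≤ PsiEmp Z τ u Γ a' b' := by
  refine mul_le_mul_of_nonneg_left (sum_rho_le_of_subgradient _ _ g hneg hpos hg ?_)
    (by positivity)
  calc ∑ i, g i * ((u ⬝ᵥ Z i - b' ⬝ᵥ (Γᵀ *ᵥ Z i) - a') - (u ⬝ᵥ Z i - b ⬝ᵥ (Γᵀ *ᵥ Z i) - a))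
      = ∑ i, (g i * (a - a') + (b - b') ⬝ᵥ (g i • (Γᵀ *ᵥ Z i))) := by
        refine Finset.sum_congr rfl fun i _ => ?_
        rw [dotProduct_smul, sub_dotProduct, smul_eq_mul]
        ring
    _ = (a - a') * ∑ i, g i + (b - b') ⬝ᵥ ∑ i, g i • (Γᵀ *ᵥ Z i) := by
        rw [Finset.sum_add_distrib, Finset.mul_sum, dotProduct_sum]
        simp only [mul_comm]
    _ = 0 := by rw [hsum, hmom, mul_zero, dotProduct_zero, add_zero]

lemma card_neg_residual_le (hn : 0 < n)
    (hmin : ∀ a' b', PsiEmp Z τ u Γ a b ≤ PsiEmp Z τ u Γ a' b') :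
    (#{i | u ⬝ᵥ Z i - b ⬝ᵥ (Γᵀ *ᵥ Z i) - a < 0} : ℝ) ≤ τ * n := by
  simpa using card_neg_le_of_sum_rho_le (τ := τ) (fun i => u ⬝ᵥ Z i - b ⬝ᵥ (Γᵀ *ᵥ Z i) - a)
    fun t => by
      refine (le_of_mul_le_mul_left (hmin (a - t) b) (by positivity)).trans_eq
        (Finset.sum_congr rfl fun i _ => ?_)
      ring_nf

end PsiEmp

lemma exists_card_lt_lt_le_card_le {ι : Type*} [Fintype ι] (f : ι → ℝ) {ℓ : ℕ} (hℓ : 1 ≤ ℓ)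
    (hℓι : ℓ ≤ Fintype.card ι) : ∃ s, #{i | s < f i} < ℓ ∧ ℓ ≤ #{i | s ≤ f i} := by
  have hι : (Finset.univ : Finset ι).Nonempty :=
    Finset.univ_nonempty_iff.mpr (Fintype.card_pos_iff.mp (by omega))
  set S := (Finset.univ.image f).filter fun c => ℓ ≤ #{i | c ≤ f i}
  obtain ⟨i₀, -, hi₀⟩ := Finset.exists_min_image Finset.univ f hι
  have hS : S.Nonempty := ⟨f i₀, Finset.mem_filter.mpr ⟨Finset.mem_image_of_mem f
    (Finset.mem_univ _), by rwa [Finset.filter_true_of_mem fun i _ => hi₀ i (Finset.mem_univ i)]⟩⟩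
  refine ⟨S.max' hS, ?_, (Finset.mem_filter.mp (S.max'_mem hS)).2⟩
  by_contra! hbig
  -- the smallest value above the maximum of `S` would again lie in `S`
  obtain ⟨j, hj, hjmin⟩ := Finset.exists_min_image {i | S.max' hS < f i} f
    (Finset.card_pos.mp (by omega))
  have hjS : f j ∈ S := Finset.mem_filter.mpr ⟨Finset.mem_image_of_mem f (Finset.mem_univ _),
    hbig.trans (Finset.card_le_card fun i hi => by
      simpa using hjmin i hi)⟩
  exact (Finset.mem_filter.mp hj).2.not_ge (S.le_max' _ hjS)

lemma exists_mem_dotProduct_ne_zero {d : ℕ} {ι : Type*} [Finite ι] {U : Set (Fin d → ℝ)}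
    (hU : IsOpen U) (hne : U.Nonempty) (m : ι → Fin d → ℝ) :
    ∃ v ∈ U, ∀ p, m p ≠ 0 → v ⬝ᵥ m p ≠ 0 := by
  have hnull : volume (⋃ p, {v : Fin d → ℝ | m p ≠ 0 ∧ v ⬝ᵥ m p = 0}) = 0 := by
    refine measure_iUnion_null fun p => ?_
    by_cases hp : m p = 0
    · simp [hp]
    refine measure_mono_null (fun v hv => ?_) (Measure.addHaar_submodule volume
      (LinearMap.ker (dotProductEquiv ℝ (Fin d) (m p))) fun h => hp ?_)
    · simpa [dotProduct_comm] using hv.2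
    · simpa using (LinearMap.ext_iff.mp (LinearMap.ker_eq_top.mp h)) (m p)
  obtain ⟨v, hvU, hv⟩ := nonempty_of_measure_ne_zero
    ((measure_sdiff_null hnull).symm ▸ (hU.measure_pos volume hne).ne' :
      volume (U \ ⋃ p, {v : Fin d → ℝ | m p ≠ 0 ∧ v ⬝ᵥ m p = 0}) ≠ 0)
  exact ⟨v, hvU, fun p hp hvp => hv (Set.mem_iUnion.mpr ⟨p, hp, hvp⟩)⟩

lemma exists_unit_dotProduct_neg_smul {d : ℕ} {v m : Fin d → ℝ} (hm : m = 0 ∨ v ⬝ᵥ m ≠ 0)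
    (hv : v ≠ 0) : ∃ u : Fin d → ℝ, ∃ c : ℝ, ∑ i, u i ^ 2 = 1 ∧ u ⬝ᵥ v < 0 ∧ m = c • u := by
  obtain ⟨w, c, hwv, hmw⟩ : ∃ w : Fin d → ℝ, ∃ c : ℝ, w ⬝ᵥ v < 0 ∧ m = c • w := by
    rcases hm with rfl | hm
    · exact ⟨-v, 0, by simpa using dotProduct_self_star_pos_iff.mpr hv, by simp⟩
    · refine ⟨-(v ⬝ᵥ m) • m, (-(v ⬝ᵥ m))⁻¹, ?_, ?_⟩
      · rw [smul_dotProduct, dotProduct_comm m, smul_eq_mul, neg_mul, neg_lt_zero]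
        exact mul_self_pos.mpr hm
      · rw [smul_smul, inv_mul_cancel₀ (neg_ne_zero.mpr hm), one_smul]
  have hw : 0 < w ⬝ᵥ w := by
    simpa using dotProduct_self_star_pos_iff.mpr fun h : w = 0 => by simp [h] at hwv
  set r := √(w ⬝ᵥ w)
  have hr : 0 < r := Real.sqrt_pos.mpr hw
  refine ⟨r⁻¹ • w, c * r, ?_, ?_, ?_⟩
  · calc ∑ i, (r⁻¹ • w) i ^ 2 = r⁻¹ ^ 2 * (w ⬝ᵥ w) := by
          simp only [Pi.smul_apply, smul_eq_mul, dotProduct, Finset.mul_sum]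
          exact Finset.sum_congr rfl fun i _ => by ring
      _ = 1 := by rw [inv_pow, Real.sq_sqrt hw.le, inv_mul_cancel₀ hw.ne']
  · rw [smul_dotProduct, smul_eq_mul]
    exact mul_neg_of_pos_of_neg (inv_pos.mpr hr) hwv
  · rw [hmw, smul_smul, mul_assoc, mul_inv_cancel₀ hr.ne', mul_one]

lemma exists_orthogonal_col_zero {k : ℕ} (u : Fin (k + 1) → ℝ) (hu : ∑ i, u i ^ 2 = 1) :
    ∃ A : Matrix (Fin (k + 1)) (Fin (k + 1)) ℝ, Aᵀ * A = 1 ∧ ∀ i, A i 0 = u i := by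
  have hu' : Orthonormal ℝ (({0} : Set (Fin (k + 1))).domRestrict fun _ => WithLp.toLp 2 u) := by
    rw [orthonormal_iff_ite]
    rintro ⟨i, rfl⟩ ⟨j, rfl⟩
    rw [Set.domRestrict_apply, PiLp.inner_apply]
    simpa using hu
  obtain ⟨b, hb⟩ := hu'.exists_orthonormalBasis_extension_of_card_eq (by simp)
  refine ⟨of fun i j => b j i, ?_, fun i => by simp [hb 0 rfl]⟩
  ext p q
  simpa [mul_apply, PiLp.inner_apply, one_apply, mul_comm] using
    orthonormal_iff_ite.mp b.orthonormal p q

lemma exists_orthonormal_complement {k : ℕ} (u : Fin (k + 1) → ℝ) (hu : ∑ i, u i ^ 2 = 1) :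
    ∃ Γ : Matrix (Fin (k + 1)) (Fin k) ℝ,
      Γᵀ * Γ = 1 ∧ Γᵀ *ᵥ u = 0 ∧ Γ * Γᵀ = 1 - vecMulVec u u := by
  obtain ⟨A, hA, hA0⟩ := exists_orthogonal_col_zero u hu
  have hAAt : A * Aᵀ = 1 := mul_eq_one_comm.mp hA
  refine ⟨A.submatrix id Fin.succ, ?_, ?_, ?_⟩
  · ext p q
    simpa [mul_apply, one_apply, Fin.succ_inj] using congr_fun₂ hA p.succ q.succ
  · ext j
    simpa [mulVec, dotProduct, mul_apply, ← hA0, Fin.succ_ne_zero] using congr_fun₂ hA j.succ 0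
  · ext i l
    have := congr_fun₂ hAAt i l
    simp only [mul_apply, transpose_apply, Fin.sum_univ_succ, hA0] at this
    simp only [mul_apply, submatrix_apply, transpose_apply, id, Matrix.sub_apply, vecMulVec_apply]
    linarith

/-- Subgradient weights of the check loss at a hyperplane, with `H` the data points strictly
above it and `T` those on it; the weight on `T` makes all weights sum to zero. -/
noncomputable def subgradientWeight {ι : Type*} [Fintype ι] (τ : ℝ) (H T : Finset ι) (i : ι) : ℝ :=
  if i ∈ H then τ - 1 else if i ∈ T then (#H + τ * #T - τ * Fintype.card ι) / #T else τ

section subgradientWeight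

variable {ι : Type*} [Fintype ι] {τ : ℝ} {H T : Finset ι}

lemma subgradientWeight_mem_Icc (hH : #H ≤ τ * Fintype.card ι)
    (hHT : τ * Fintype.card ι < #H + #T) (i : ι) : subgradientWeight τ H T i ∈ Set.Icc (τ - 1) τ := by
  have hT : (0 : ℝ) < #T := by linarith
  unfold subgradientWeight
  split_ifs
  · exact ⟨le_rfl, by linarith⟩
  · exact ⟨(le_div_iff₀ hT).mpr (by linarith), (div_le_iff₀ hT).mpr (by linarith)⟩
  · exact ⟨by linarith, le_rfl⟩

lemma sum_subgradientWeight (hHT : Disjoint H T) (hT : T.Nonempty) :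
    ∑ i, subgradientWeight τ H T i = 0 := by
  have hT : (#T : ℝ) ≠ 0 := by exact_mod_cast hT.card_pos.ne'
  have hw : ∀ i, subgradientWeight τ H T i = τ - (if i ∈ H then 1 else 0) +
      (if i ∈ T then (#H + τ * #T - τ * Fintype.card ι) / #T - τ else 0) := by
    intro i
    unfold subgradientWeight
    by_cases hiH : i ∈ H
    · simp [hiH, Finset.disjoint_left.mp hHT hiH]
    · by_cases hiT : i ∈ T <;> simp [hiH, hiT]
  simp only [hw, Finset.sum_add_distrib, Finset.sum_sub_distrib, Finset.sum_const,
    Finset.sum_boole, Finset.sum_ite_mem, Finset.univ_inter, Finset.card_univ, nsmul_eq_mul,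
    Finset.filter_mem_eq_inter]
  field_simp
  ring

end subgradientWeight

section Regions

variable {k n : ℕ} (Z : Fin n → (Fin (k + 1) → ℝ)) {τ : ℝ} {ℓ : ℕ}

lemma mem_empDepthRegion_iff (hn : 0 < n) {z : Fin (k + 1) → ℝ} :
    z ∈ empDepthRegion Z ((ℓ : ℝ) / n) ↔
      ∀ v c, v ≠ 0 → c ≤ v ⬝ᵥ z → ℓ ≤ #{i | c ≤ v ⬝ᵥ Z i} := by
  have hnR : (0 : ℝ) < n := by exact_mod_cast hn
  change (ℓ : ℝ) / n ≤ empDepth Z z ↔ _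
  rw [empDepth, le_csInf_iff]
  · constructor
    · intro h v c hv hc
      exact_mod_cast (div_le_div_iff_of_pos_right hnR).mp (h _ ⟨v, c, hv, hc, rfl⟩)
    · rintro h _ ⟨v, c, hv, hc, rfl⟩
      exact div_le_div_of_nonneg_right (by exact_mod_cast h v c hv hc) hnR.le
  · exact ⟨0, by rintro r ⟨v, c, -, -, rfl⟩; positivity⟩
  · exact ⟨_, fun _ => 1, _, fun h => one_ne_zero (congr_fun h 0), le_rfl, rfl⟩

lemma empDepthRegion_subset_empQuantileRegion (hn : 0 < n) (hτ : τ * n < ℓ) :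
    empDepthRegion Z ((ℓ : ℝ) / n) ⊆ empQuantileRegion Z τ := by
  intro z hz u Γ a b hu hΓ hΓu hmin
  by_contra! hlt
  set v := Γ *ᵥ b - u
  have hres : ∀ x, u ⬝ᵥ x - b ⬝ᵥ (Γᵀ *ᵥ x) - a = -(v ⬝ᵥ x) - a := fun x => by
    rw [dotProduct_transpose_mulVec, dotProduct_comm x, sub_dotProduct]; ring
  have hv : v ≠ 0 := by
    have hvu : v ⬝ᵥ u = -1 := by
      rw [sub_dotProduct, dotProduct_comm, ← dotProduct_transpose_mulVec, hΓu, dotProduct_zero]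
      simpa [dotProduct, sq] using congr_arg Neg.neg hu
    intro h
    simp [h] at hvu
  have hcount : (ℓ : ℝ) ≤ #{i | u ⬝ᵥ Z i - b ⬝ᵥ (Γᵀ *ᵥ Z i) - a < 0} := by
    refine Nat.cast_le.mpr (((mem_empDepthRegion_iff Z hn).mp hz v _ hv le_rfl).trans
      (Finset.card_le_card fun i hi => ?_))
    simp only [Finset.mem_filter, Finset.mem_univ, true_and, hres] at hi ⊢
    linarith [hres z]
  linarith [card_neg_residual_le Z u Γ a b hn hmin]

/-- The hyperplane `v ⬝ᵥ x = s` is an empirical quantile hyperplane for the direction of the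
moment vector `∑ i, g i • Z i` (or of `-v` when that vanishes). -/
lemma dotProduct_le_of_mem_empQuantileRegion {v : Fin (k + 1) → ℝ} (hv : v ≠ 0)
    {s : ℝ} {g : Fin n → ℝ} (hlt : ∀ i, v ⬝ᵥ Z i < s → g i = τ)
    (hgt : ∀ i, s < v ⬝ᵥ Z i → g i = τ - 1) (hg : ∀ i, g i ∈ Set.Icc (τ - 1) τ)
    (hsum : ∑ i, g i = 0) (hm : ∑ i, g i • Z i = 0 ∨ v ⬝ᵥ ∑ i, g i • Z i ≠ 0)
    {z : Fin (k + 1) → ℝ} (hz : z ∈ empQuantileRegion Z τ) : v ⬝ᵥ z ≤ s := by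
  obtain ⟨u, c, hu, huv, hmu⟩ := exists_unit_dotProduct_neg_smul hm hv
  obtain ⟨Γ, hΓ, hΓu, hΓΓ⟩ := exists_orthonormal_complement u hu
  set β := -(u ⬝ᵥ v)⁻¹
  have hβ : 0 < β := neg_pos.mpr (inv_lt_zero.mpr huv)
  have hβuv : β * (u ⬝ᵥ v) = -1 := by simp [β, huv.ne]
  have hres : ∀ x, u ⬝ᵥ x - (β • (Γᵀ *ᵥ v)) ⬝ᵥ (Γᵀ *ᵥ x) - -(β * s) = β * (s - v ⬝ᵥ x) := by
    intro x
    rw [dotProduct_transpose_mulVec, dotProduct_comm x, mulVec_smul, mulVec_mulVec, hΓΓ,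
      sub_mulVec, one_mulVec, vecMulVec_mulVec, op_smul_eq_smul, smul_dotProduct, sub_dotProduct,
      smul_dotProduct, smul_eq_mul, smul_eq_mul]
    linear_combination (u ⬝ᵥ x) * hβuv
  have hmin := PsiEmp_le_of_subgradient Z u Γ (-(β * s)) (β • (Γᵀ *ᵥ v)) g
    (fun i hi => hgt i (by nlinarith [hres (Z i)]))
    (fun i hi => hlt i (by nlinarith [hres (Z i)])) hg hsum
    (by simp_rw [← mulVec_smul, ← mulVec_sum, hmu, mulVec_smul, hΓu, smul_zero])
  have := hz u Γ _ _ hu hΓ hΓu hmin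
  nlinarith [hres z]

lemma le_card_of_mem_empQuantileRegion (hℓ : 1 ≤ ℓ) (hℓn : ℓ ≤ n) (hτl : (ℓ : ℝ) - 1 ≤ τ * n)
    (hτu : τ * n < ℓ) {v : Fin (k + 1) → ℝ}
    (hv : ∀ H T : Finset (Fin n), ∑ i, subgradientWeight τ H T i • Z i ≠ 0 →
      v ⬝ᵥ ∑ i, subgradientWeight τ H T i • Z i ≠ 0)
    {z : Fin (k + 1) → ℝ} (hz : z ∈ empQuantileRegion Z τ) :
    ℓ ≤ #{i | v ⬝ᵥ z ≤ v ⬝ᵥ Z i} := by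
  by_cases hv₀ : v = 0
  · simpa [hv₀] using hℓn
  obtain ⟨s, hsH, hsHT⟩ := exists_card_lt_lt_le_card_le (fun i => v ⬝ᵥ Z i) hℓ (by simpa using hℓn)
  set H : Finset (Fin n) := {i | s < v ⬝ᵥ Z i}
  set T : Finset (Fin n) := {i | v ⬝ᵥ Z i = s}
  have hHT : Disjoint H T := Finset.disjoint_filter.mpr fun i _ h₁ h₂ => h₁.ne' h₂
  have hcard : #{i | s ≤ v ⬝ᵥ Z i} = #H + #T := by
    rw [← Finset.card_union_of_disjoint hHT, ← Finset.filter_or]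
    simp_rw [le_iff_lt_or_eq, eq_comm]
  have hHT' : ℓ ≤ #H + #T := hcard ▸ hsHT
  have hs : v ⬝ᵥ z ≤ s := by
    refine dotProduct_le_of_mem_empQuantileRegion Z hv₀ (g := subgradientWeight τ H T)
      (fun i hi => ?_) (fun i hi => ?_) (subgradientWeight_mem_Icc ?_ ?_) (sum_subgradientWeight hHT ?_)
      (or_iff_not_imp_left.mpr (hv H T)) hz
    · simp [subgradientWeight, H, T, hi.not_gt, hi.ne]
    · simp [subgradientWeight, H, hi]
    · have : (#H : ℝ) + 1 ≤ ℓ := by exact_mod_cast hsH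
      rw [Fintype.card_fin]
      linarith
    · have : (ℓ : ℝ) ≤ #H + #T := by exact_mod_cast hHT'
      rw [Fintype.card_fin]
      linarith
    · exact Finset.card_pos.mp (by omega)
  refine hsHT.trans (Finset.card_le_card fun i hi => ?_)
  simp only [Finset.mem_filter, Finset.mem_univ, true_and] at hi ⊢
  linarith

lemma empQuantileRegion_subset_empDepthRegion (hℓ : 1 ≤ ℓ) (hℓn : ℓ ≤ n)
    (hτl : (ℓ : ℝ) - 1 ≤ τ * n) (hτu : τ * n < ℓ) :
    empQuantileRegion Z τ ⊆ empDepthRegion Z ((ℓ : ℝ) / n) := by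
  intro z hz
  rw [mem_empDepthRegion_iff Z (by omega)]
  intro v₀ c _ hc
  set W : Finset (Fin n) := {i | v₀ ⬝ᵥ Z i < v₀ ⬝ᵥ z}
  -- perturb `v₀` into a direction not orthogonal to any nonzero moment vector
  obtain ⟨v, hvW, hv⟩ := exists_mem_dotProduct_ne_zero
    (isOpen_biInter_finset fun i (_ : i ∈ W) =>
      isOpen_lt (f := fun v => v ⬝ᵥ Z i) (g := fun v => v ⬝ᵥ z) (by fun_prop) (by fun_prop))
    ⟨v₀, Set.mem_iInter₂.mpr fun i hi => (Finset.mem_filter.mp hi).2⟩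
    fun P : Finset (Fin n) × Finset (Fin n) => ∑ i, subgradientWeight τ P.1 P.2 i • Z i
  calc ℓ ≤ #{i | v ⬝ᵥ z ≤ v ⬝ᵥ Z i} :=
        le_card_of_mem_empQuantileRegion Z hℓ hℓn hτl hτu (fun H T => hv (H, T)) hz
    _ ≤ #{i | c ≤ v₀ ⬝ᵥ Z i} := Finset.card_le_card fun i hi => by
        simp only [Finset.mem_filter, Finset.mem_univ, true_and] at hi ⊢
        by_contra! h
        exact (Set.mem_iInter₂.mp hvW i (by simp [W]; linarith)).not_ge hi

end Regions

theorem stmt17_general {k n : ℕ} (Z : Fin n → (Fin (k + 1) → ℝ)) :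
    ∀ ℓ : ℕ, 1 ≤ ℓ → ℓ ≤ n - (k + 1) →
      (interior (empDepthRegion Z ((ℓ : ℝ) / n))).Nonempty →
      ∀ τ : ℝ, 0 < τ → ((ℓ : ℝ) - 1) / n ≤ τ → τ < (ℓ : ℝ) / n →
        empQuantileRegion Z τ = empDepthRegion Z ((ℓ : ℝ) / n) := by
  intro ℓ hℓ hℓn _ τ _ hτl hτu
  have hn : 0 < n := by omega
  have hnR : (0 : ℝ) < n := by exact_mod_cast hn
  rw [div_le_iff₀ hnR] at hτl
  rw [lt_div_iff₀ hnR] at hτu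
  exact (empQuantileRegion_subset_empDepthRegion Z hℓ (by omega) hτl hτu).antisymm
    (empDepthRegion_subset_empQuantileRegion Z hn hτu)

theorem stmt17 {k n : ℕ} (Z : Fin n → (Fin (k + 1) → ℝ))
    (hn : k + 2 ≤ n)
    (hgen : ∀ v : Fin (k + 1) → ℝ, ∀ c : ℝ, v ≠ 0 →
      (Finset.univ.filter fun i => v ⬝ᵥ Z i = c).card ≤ k + 1) :
    ∀ ℓ : ℕ, 1 ≤ ℓ → ℓ ≤ n - (k + 1) →
      (interior (empDepthRegion Z ((ℓ : ℝ) / n))).Nonempty →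
      ∀ τ : ℝ, 0 < τ → ((ℓ : ℝ) - 1) / n ≤ τ → τ < (ℓ : ℝ) / n →
        empQuantileRegion Z τ = empDepthRegion Z ((ℓ : ℝ) / n) :=
  stmt17_general Z
end
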